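/- arXiv:1406.5551 — 2 statements merged into one kernel-verified Lean document; each statement's English description precedes it below -/
import Mathlib

section
/- Let E and F be real Banach spaces, u : E → F a bounded linear operator, and 1 < p < ∞. Then u is Cohen strongly p-summing as a linear operator if and only if u is Lipschitz-Cohen strongly p-summing as a Lipschitz map, and the corresponding norms coincide: d_p(u) = d_p^L(u). -/
open scoped BigOperators NNReal

noncomputable section

/-- `sup_{g ∈ B_{Y*}} (Σ_i |g(y_i)|^q)^{1/q}`. -/
def dualBallSup {Y : Type*} [NormedAddCommGroup Y] [NormedSpace ℝ Y]
    (q : ℝ) {n : ℕ} (y : Fin n → Y) : ℝ :=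
  ⨆ g : {g : Y →L[ℝ] ℝ // ‖g‖ ≤ 1}, (∑ i, |g.1 (y i)| ^ q) ^ (1 / q)

/-- `u` is Cohen strongly `p`-summing with constant `C` (here `q = p*` is the conjugate
exponent): `Σ_i |⟨u(x_i), y_i*⟩| ≤ C (Σ_i ‖x_i‖^p)^{1/p} · sup_{y** ∈ B_{F**}}
(Σ_i |y**(y_i*)|^{p*})^{1/p*}` for all finite families. -/
def CohenCond {E F : Type*} [NormedAddCommGroup E] [NormedSpace ℝ E]
    [NormedAddCommGroup F] [NormedSpace ℝ F]
    (p q : ℝ) (u : E →L[ℝ] F) (C : ℝ) : Prop :=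
  ∀ (n : ℕ) (x : Fin n → E) (ys : Fin n → (F →L[ℝ] ℝ)),
    ∑ i, |ys i (u (x i))| ≤ C * (∑ i, ‖x i‖ ^ p) ^ (1 / p) * dualBallSup q ys

/-- `T` is Lipschitz-Cohen strongly `p`-summing with constant `C` (here `q = p*`):
`Σ_i λ_i |⟨T(x_i) − T(x_i'), y_i*⟩| ≤ C (Σ_i λ_i^p d(x_i,x_i')^p)^{1/p} ·
sup_{y** ∈ B_{Y**}} (Σ_i |y**(y_i*)|^{p*})^{1/p*}` for all finite families with
`λ_i > 0`. -/
def LipCohenCond {X : Type*} [MetricSpace X] {Y : Type*} [NormedAddCommGroup Y]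
    [NormedSpace ℝ Y] (p q : ℝ) (T : X → Y) (C : ℝ) : Prop :=
  ∀ (n : ℕ) (x x' : Fin n → X) (ys : Fin n → (Y →L[ℝ] ℝ)) (lam : Fin n → ℝ),
    (∀ i, 0 < lam i) →
    ∑ i, lam i * |ys i (T (x i)) - ys i (T (x' i))| ≤
      C * (∑ i, lam i ^ p * dist (x i) (x' i) ^ p) ^ (1 / p) * dualBallSup q ys

/-!
By linearity, `λ_i |⟨u(x_i) − u(x_i'), y_i*⟩| = |⟨u(λ_i (x_i − x_i')), y_i*⟩|` and
`λ_i d(x_i, x_i') = ‖λ_i (x_i − x_i')‖`, so the Lipschitz inequality for the pairs `(x_i, x_i')`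
with weights `λ_i` is the linear inequality for the vectors `λ_i (x_i − x_i')`. Conversely the
linear inequality is the Lipschitz one for the pairs `(x_i, 0)` with all weights `1`. Hence the
two conditions agree for every constant `C`, and so do their infima.
-/

section

variable {E F : Type*} [NormedAddCommGroup E] [NormedSpace ℝ E]
  [NormedAddCommGroup F] [NormedSpace ℝ F] {p q C : ℝ} {u : E →L[ℝ] F}

lemma CohenCond.lipCohenCond (h : CohenCond p q u C) : LipCohenCond p q (⇑u) C := by
  intro n x x' ys lam hlam
  have weighted_pairing (i : Fin n) :
      lam i * |ys i (u (x i)) - ys i (u (x' i))| = |ys i (u (lam i • (x i - x' i)))| := by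
    rw [map_smul, map_smul, smul_eq_mul, abs_mul, abs_of_pos (hlam i), map_sub, map_sub]
  have weighted_dist (i : Fin n) :
      lam i ^ p * dist (x i) (x' i) ^ p = ‖lam i • (x i - x' i)‖ ^ p := by
    rw [norm_smul, Real.norm_eq_abs, abs_of_pos (hlam i), dist_eq_norm,
      Real.mul_rpow (hlam i).le (norm_nonneg _)]
  simp only [weighted_pairing, weighted_dist]
  exact h n (fun i => lam i • (x i - x' i)) ys

lemma LipCohenCond.cohenCond (h : LipCohenCond p q (⇑u) C) : CohenCond p q u C := by
  intro n x ys
  simpa only [Pi.zero_apply, Pi.one_apply, map_zero, sub_zero, one_mul, Real.one_rpow,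
    dist_zero_right] using
    h n x 0 ys 1 fun _ => one_pos

lemma cohenCond_iff_lipCohenCond : CohenCond p q u C ↔ LipCohenCond p q (⇑u) C :=
  ⟨CohenCond.lipCohenCond, LipCohenCond.cohenCond⟩

end

theorem cohen_linear_iff_lipschitz_general {E F : Type*}
    [NormedAddCommGroup E] [NormedSpace ℝ E]
    [NormedAddCommGroup F] [NormedSpace ℝ F]
    (p q : ℝ) (u : E →L[ℝ] F) :
    ((∃ C > 0, CohenCond p q u C) ↔ (∃ C > 0, LipCohenCond p q (⇑u) C)) ∧
    sInf {C : ℝ | 0 < C ∧ CohenCond p q u C} =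
      sInf {C : ℝ | 0 < C ∧ LipCohenCond p q (⇑u) C} := by
  simp only [cohenCond_iff_lipCohenCond, iff_self, true_and]

/-- A bounded linear operator is Cohen strongly `p`-summing iff it is
Lipschitz-Cohen strongly `p`-summing, with `d_p(u) = d_p^L(u)`. -/
theorem cohen_linear_iff_lipschitz {E F : Type*}
    [NormedAddCommGroup E] [NormedSpace ℝ E] [CompleteSpace E]
    [NormedAddCommGroup F] [NormedSpace ℝ F] [CompleteSpace F]
    (p q : ℝ) (hp : 1 < p) (hpq : 1 / p + 1 / q = 1) (u : E →L[ℝ] F) :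
    ((∃ C > 0, CohenCond p q u C) ↔ (∃ C > 0, LipCohenCond p q (⇑u) C)) ∧
    sInf {C : ℝ | 0 < C ∧ CohenCond p q u C} =
      sInf {C : ℝ | 0 < C ∧ LipCohenCond p q (⇑u) C} :=
  cohen_linear_iff_lipschitz_general p q u

end
end

section
/- Let X be a pointed metric space, Y a real Banach space, 1 < p < ∞, and let (ℱ(X), δ_X) be a Lipschitz-free space over X. Let T : X → Y be a Lipschitz map with T(0) = 0 and let T̂ : ℱ(X) → Y be its linearization. Then T is Lipschitz-Cohen strongly p-summing if and only if T̂ is Cohen strongly p-summing, and d_p^L(T) = d_p(T̂). -/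
/-!
Testing the Cohen inequality of `T̂` on the vectors `λᵢ (δ xᵢ - δ xᵢ')` gives the
Lipschitz-Cohen inequality for `T` at once, with the same constant.

Conversely, both sides of the Cohen inequality are continuous, so it suffices to test `T̂` on
the span of the molecules `δ u - δ w`, which is dense. There, Hahn–Banach together with the
universal property shows that the norm of `ℱ(X)` dominates the Arens–Eells norm
`inf Σ |a_j| d(u_j, w_j)` over representations `Σ a_j (δ u_j - δ w_j)`. Given near-optimal
representations of the `xᵢ`, with weights `s_ij = |a_ij| d(u_ij, w_ij)` and `S_i = Σ_j s_ij`,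
split `yᵢ*` into the functionals `(s_ij / S_i)^(1/p*) yᵢ*` and take
`λ_ij = |a_ij| (S_i / s_ij)^(1/p*)`: the weak `ℓ_{p*}`-norm does not grow, and
`Σ_j λ_ij^p d_ij^p = S_i^p` (the equality case of Hölder), so the Lipschitz-Cohen inequality
for `T` yields the Cohen inequality for `T̂` with the same constant.
-/

open scoped BigOperators NNReal

noncomputable section

universe u v w

/-- The (least) Lipschitz constant of a map. -/
def lipConst {α : Type*} {β : Type*} [PseudoMetricSpace α] [PseudoMetricSpace β]
    (g : α → β) : ℝ≥0 :=
  sInf {K : ℝ≥0 | LipschitzWith K g}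

/-- `(F, δ)` is a Lipschitz-free space over the pointed metric space `(X, x0)`:
`δ` is an isometric embedding sending `x0` to `0` with dense linear span, and every
Lipschitz map `g : X → Z` into a Banach space with `g x0 = 0` admits a unique bounded
linear factorization `ĝ : F → Z` through `δ`, with `‖ĝ‖ = Lip(g)`. -/
def IsFreeSpace {X : Type u} [MetricSpace X] (x0 : X) {F : Type v}
    [NormedAddCommGroup F] [NormedSpace ℝ F] [CompleteSpace F] (δ : X → F) : Prop :=
  (∀ x x' : X, dist (δ x) (δ x') = dist x x') ∧
  δ x0 = 0 ∧
  Dense (Submodule.span ℝ (Set.range δ) : Set F) ∧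
  ∀ (Z : Type w) [NormedAddCommGroup Z] [NormedSpace ℝ Z] [CompleteSpace Z],
    ∀ g : X → Z, (∃ K : ℝ≥0, LipschitzWith K g) → g x0 = 0 →
      ∃! ghat : F →L[ℝ] Z, (∀ x, ghat (δ x) = g x) ∧ ‖ghat‖ = (lipConst g : ℝ)

open Set Submodule

section WeakNorm

variable {Y : Type*} [NormedAddCommGroup Y] [NormedSpace ℝ Y] {q : ℝ}

def weakLqNorm (q : ℝ) {ι : Type*} [Fintype ι] (y : ι → Y) : ℝ :=
  ⨆ g : {g : Y →L[ℝ] ℝ // ‖g‖ ≤ 1}, (∑ i, |g.1 (y i)| ^ q) ^ (1 / q)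

theorem dualBallSup_eq_weakLqNorm (q : ℝ) {n : ℕ} (y : Fin n → Y) :
    dualBallSup q y = weakLqNorm q y :=
  rfl

variable {ι κ : Type*} [Fintype ι] [Fintype κ]

theorem weakLqNorm_nonneg (q : ℝ) (y : ι → Y) : 0 ≤ weakLqNorm q y :=
  Real.iSup_nonneg fun _ =>
    Real.rpow_nonneg (Finset.sum_nonneg fun _ _ => Real.rpow_nonneg (abs_nonneg _) _) _

theorem weakLqNorm_le_weakLqNorm (hq : 0 ≤ q) {y : ι → Y} {z : κ → Y}
    (h : ∀ g : Y →L[ℝ] ℝ, ∑ i, |g (y i)| ^ q ≤ ∑ j, |g (z j)| ^ q) :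
    weakLqNorm q y ≤ weakLqNorm q z := by
  have hbdd : BddAbove (range fun g : {g : Y →L[ℝ] ℝ // ‖g‖ ≤ 1} =>
      (∑ j, |g.1 (z j)| ^ q) ^ (1 / q)) := by
    refine ⟨(∑ j, ‖z j‖ ^ q) ^ (1 / q), forall_mem_range.2 fun g => ?_⟩
    gcongr with j
    simpa only [Real.norm_eq_abs, one_mul] using g.1.le_of_opNorm_le g.2 (z j)
  exact ciSup_mono hbdd fun g => by gcongr; exact h g.1

theorem weakLqNorm_comp_equiv (e : κ ≃ ι) (y : ι → Y) :
    weakLqNorm q (y ∘ e) = weakLqNorm q y :=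
  iSup_congr fun g => congrArg (· ^ (1 / q)) (e.sum_comp fun i => |g.1 (y i)| ^ q)

theorem weakLqNorm_sigma_smul_le (hq : 0 ≤ q) {ρ : ι → Type*} [∀ i, Fintype (ρ i)]
    {t : ∀ i, ρ i → ℝ} (ht : ∀ i j, 0 ≤ t i j) (ht1 : ∀ i, ∑ j, t i j ^ q ≤ 1) (y : ι → Y) :
    weakLqNorm q (fun ij : Σ i, ρ i => t ij.1 ij.2 • y ij.1) ≤ weakLqNorm q y := by
  refine weakLqNorm_le_weakLqNorm hq fun g => ?_
  rw [Fintype.sum_sigma]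
  refine Finset.sum_le_sum fun i _ => ?_
  simp only [map_smul, smul_eq_mul, abs_mul, abs_of_nonneg (ht _ _),
    Real.mul_rpow (ht _ _) (abs_nonneg _), ← Finset.sum_mul]
  exact mul_le_of_le_one_left (by positivity) (ht1 i)

end WeakNorm

section Splitting

variable {κ : Type*} [Fintype κ] {p q : ℝ}

theorem sum_rpow_div_sum_rpow_le_one (hq : q ≠ 0) {s : κ → ℝ} (hs : ∀ j, 0 ≤ s j) :
    ∑ j, ((s j / ∑ k, s k) ^ (1 / q)) ^ q ≤ 1 := by
  have hS : 0 ≤ ∑ k, s k := Finset.sum_nonneg fun k _ => hs k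
  simp_rw [one_div, Real.rpow_inv_rpow (div_nonneg (hs _) hS) hq, ← Finset.sum_div]
  exact div_self_le_one _

theorem eq_zero_of_rpow_div_sum_eq_zero {y : ℝ} (hy : y ≠ 0) {s : κ → ℝ} (hs : ∀ j, 0 ≤ s j)
    {j : κ} (h : (s j / ∑ k, s k) ^ y = 0) : s j = 0 := by
  have hS : 0 ≤ ∑ k, s k := Finset.sum_nonneg fun k _ => hs k
  rcases div_eq_zero_iff.1 ((Real.rpow_eq_zero (div_nonneg (hs j) hS) hy).1 h) with h0 | h0
  · exact h0
  · exact le_antisymm (h0 ▸ Finset.single_le_sum (fun k _ => hs k) (Finset.mem_univ j)) (hs j)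

theorem div_rpow_div_rpow_eq (hpq : p.HolderConjugate q) {s S : ℝ} (hs : 0 ≤ s) (hS : 0 < S) :
    (s / (s / S) ^ (1 / q)) ^ p = s * S ^ (p - 1) := by
  rcases hs.eq_or_lt with rfl | hs
  · simp [Real.zero_rpow hpq.ne_zero]
  have hexp : 1 - 1 / q = 1 / p := by rw [one_div, one_div, hpq.symm.one_sub_inv]
  have hsplit : s / (s / S) ^ (1 / q) = s ^ (1 / p) * S ^ (1 / q) := by
    rw [Real.div_rpow hs.le hS.le, div_div_eq_mul_div, mul_div_right_comm,
      ← Real.rpow_one_sub' hs.le (hexp ▸ hpq.one_div_ne_zero), hexp]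
  rw [hsplit, Real.mul_rpow (by positivity) (by positivity), ← Real.rpow_mul hs.le,
    ← Real.rpow_mul hS.le, one_div_mul_cancel hpq.ne_zero, Real.rpow_one, one_div_mul_eq_div,
    hpq.div_conj_eq_sub_one]

theorem sum_div_rpow_div_sum_rpow (hpq : p.HolderConjugate q) {s : κ → ℝ} (hs : ∀ j, 0 ≤ s j) :
    ∑ j, (s j / (s j / ∑ k, s k) ^ (1 / q)) ^ p = (∑ k, s k) ^ p := by
  rcases (Finset.sum_nonneg fun k _ => hs k).eq_or_lt with hS | hS
  · have hs0 : ∀ j, s j = 0 := fun j =>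
      (Finset.sum_eq_zero_iff_of_nonneg fun k _ => hs k).1 hS.symm j (Finset.mem_univ j)
    simp [hs0, Real.zero_rpow hpq.ne_zero]
  · simp_rw [div_rpow_div_rpow_eq hpq (hs _) hS, ← Finset.sum_mul,
      Real.rpow_sub_one hS.ne', mul_div_cancel₀ _ hS.ne']

end Splitting

namespace LipCohenCond

variable {X : Type*} [MetricSpace X] {Y : Type*} [NormedAddCommGroup Y] [NormedSpace ℝ Y]
  {p q C : ℝ} {T : X → Y}

theorem sum_le (h : LipCohenCond p q T C) (hp : 0 < p) {ι : Type*} [Fintype ι]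
    (x x' : ι → X) (ys : ι → Y →L[ℝ] ℝ) (lam : ι → ℝ) (hlam : ∀ i, 0 ≤ lam i) :
    ∑ i, lam i * |ys i (T (x i)) - ys i (T (x' i))| ≤
      C * (∑ i, lam i ^ p * dist (x i) (x' i) ^ p) ^ (1 / p) * weakLqNorm q ys := by
  classical
  -- a zero weight is traded for the weight `1` on the degenerate pair `(x i, x i)`
  set x'' : ι → X := fun i => if lam i = 0 then x i else x' i
  set lam' : ι → ℝ := fun i => if lam i = 0 then 1 else lam i
  have hlam' : ∀ i, 0 < lam' i := fun i => by
    by_cases hi : lam i = 0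
    · simp [lam', hi]
    · simpa [lam', hi] using (hlam i).lt_of_ne' hi
  have hlhs : ∀ i, lam' i * |ys i (T (x i)) - ys i (T (x'' i))| =
      lam i * |ys i (T (x i)) - ys i (T (x' i))| := fun i => by
    by_cases hi : lam i = 0 <;> simp [lam', x'', hi]
  have hrhs : ∀ i, lam' i ^ p * dist (x i) (x'' i) ^ p = lam i ^ p * dist (x i) (x' i) ^ p :=
    fun i => by by_cases hi : lam i = 0 <;> simp [lam', x'', hi, Real.zero_rpow hp.ne']
  set e := (Fintype.equivFin ι).symm
  have key := h _ (x ∘ e) (x'' ∘ e) (ys ∘ e) (lam' ∘ e) fun j => hlam' (e j)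
  rw [dualBallSup_eq_weakLqNorm, weakLqNorm_comp_equiv] at key
  simp only [Function.comp_apply] at key
  rwa [e.sum_comp (fun i => lam' i * |ys i (T (x i)) - ys i (T (x'' i))|),
    e.sum_comp (fun i => lam' i ^ p * dist (x i) (x'' i) ^ p),
    Finset.sum_congr rfl fun i _ => hlhs i, Finset.sum_congr rfl fun i _ => hrhs i] at key

theorem sum_abs_sum_le (h : LipCohenCond p q T C) (hC : 0 ≤ C) (hpq : p.HolderConjugate q)
    {ι : Type*} [Fintype ι] {κ : ι → Type*} [∀ i, Fintype (κ i)] (a : ∀ i, κ i → ℝ)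
    (u w : ∀ i, κ i → X) (ys : ι → Y →L[ℝ] ℝ) :
    ∑ i, |∑ j, a i j * (ys i (T (u i j)) - ys i (T (w i j)))| ≤
      C * (∑ i, (∑ j, |a i j| * dist (u i j) (w i j)) ^ p) ^ (1 / p) * weakLqNorm q ys := by
  set s : ∀ i, κ i → ℝ := fun i j => |a i j| * dist (u i j) (w i j)
  have hs : ∀ i j, 0 ≤ s i j := fun i j => mul_nonneg (abs_nonneg _) dist_nonneg
  set t : ∀ i, κ i → ℝ := fun i j => (s i j / ∑ k, s i k) ^ (1 / q)
  have ht : ∀ i j, 0 ≤ t i j := fun i j =>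
    Real.rpow_nonneg (div_nonneg (hs i j) (Finset.sum_nonneg fun k _ => hs i k)) _
  have key := h.sum_le hpq.pos (fun ij : Σ i, κ i => u ij.1 ij.2) (fun ij => w ij.1 ij.2)
    (fun ij => t ij.1 ij.2 • ys ij.1) (fun ij => |a ij.1 ij.2| / t ij.1 ij.2)
    fun ij => div_nonneg (abs_nonneg _) (ht _ _)
  simp only [Fintype.sum_sigma] at key
  have hsplit : ∀ i j, |a i j * (ys i (T (u i j)) - ys i (T (w i j)))| ≤
      |a i j| / t i j * |(t i j • ys i) (T (u i j)) - (t i j • ys i) (T (w i j))| := by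
    intro i j
    simp only [smul_apply, smul_eq_mul, ← mul_sub, abs_mul, abs_of_nonneg (ht i j)]
    rcases (ht i j).eq_or_lt with hzero | hpos
    -- the junk value `|a i j| / 0 = 0` is harmless: then `a i j = 0` or `u i j = w i j`
    · rcases mul_eq_zero.1 (eq_zero_of_rpow_div_sum_eq_zero hpq.symm.one_div_ne_zero (hs i)
        hzero.symm) with h0 | h0
      · simp [abs_eq_zero.1 h0]
      · simp [dist_eq_zero.1 h0]
    · exact le_of_eq (by field_simp)
  have hweights : ∀ i, ∑ j, (|a i j| / t i j) ^ p * dist (u i j) (w i j) ^ p =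
      (∑ j, s i j) ^ p := by
    intro i
    rw [← sum_div_rpow_div_sum_rpow hpq (hs i)]
    refine Finset.sum_congr rfl fun j _ => ?_
    rw [← Real.mul_rpow (div_nonneg (abs_nonneg _) (ht i j)) dist_nonneg, div_mul_eq_mul_div]
  have hweak := weakLqNorm_sigma_smul_le hpq.symm.nonneg ht
    (fun i => sum_rpow_div_sum_rpow_le_one hpq.symm.ne_zero (hs i)) ys
  calc ∑ i, |∑ j, a i j * (ys i (T (u i j)) - ys i (T (w i j)))|
      ≤ ∑ i, ∑ j, |a i j| / t i j *
          |(t i j • ys i) (T (u i j)) - (t i j • ys i) (T (w i j))| :=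
        Finset.sum_le_sum fun i _ =>
          (Finset.abs_sum_le_sum_abs _ _).trans (Finset.sum_le_sum fun j _ => hsplit i j)
    _ ≤ C * (∑ i, (∑ j, s i j) ^ p) ^ (1 / p) *
          weakLqNorm q (fun ij : Σ i, κ i => t ij.1 ij.2 • ys ij.1) := by
        simpa only [hweights] using key
    _ ≤ C * (∑ i, (∑ j, s i j) ^ p) ^ (1 / p) * weakLqNorm q ys := by gcongr

end LipCohenCond

theorem CohenCond.of_dense {E F : Type*} [NormedAddCommGroup E] [NormedSpace ℝ E]
    [NormedAddCommGroup F] [NormedSpace ℝ F] {p q C : ℝ} (hp : 0 < p) {u : E →L[ℝ] F}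
    {V : Set E} (hV : Dense V)
    (h : ∀ (n : ℕ) (x : Fin n → E), (∀ i, x i ∈ V) → ∀ ys : Fin n → (F →L[ℝ] ℝ),
      ∑ i, |ys i (u (x i))| ≤ C * (∑ i, ‖x i‖ ^ p) ^ (1 / p) * dualBallSup q ys) :
    CohenCond p q u C := by
  intro n x ys
  induction x using (dense_pi univ fun i _ => hV).induction with
  | mem x hx => exact h n x (fun i => hx i (mem_univ i)) ys
  | isClosed =>
    refine isClosed_le (by fun_prop) (Continuous.mul (continuous_const.mul ?_) continuous_const)
    exact (continuous_finsetSum _ fun i _ =>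
      ((continuous_apply i).norm.rpow_const fun _ => Or.inr hp.le)).rpow_const
        fun _ => Or.inr (one_div_nonneg.2 hp.le)

theorem lipCohenCond_of_cohenCond {X : Type*} [MetricSpace X] {Y : Type*} [NormedAddCommGroup Y]
    [NormedSpace ℝ Y] {F : Type*} [NormedAddCommGroup F] [NormedSpace ℝ F] {p q C : ℝ}
    {δ : X → F} (hδ : ∀ x x', dist (δ x) (δ x') = dist x x') {T : X → Y} {That : F →L[ℝ] Y}
    (hThat : ∀ x, That (δ x) = T x) (h : CohenCond p q That C) : LipCohenCond p q T C := by
  intro n x x' ys lam hlam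
  have hterm : ∀ i, lam i * |ys i (T (x i)) - ys i (T (x' i))| =
      |ys i (That (lam i • (δ (x i) - δ (x' i))))| := fun i => by
    rw [map_smul, map_sub, hThat, hThat, map_smul, map_sub, smul_eq_mul, abs_mul,
      abs_of_pos (hlam i)]
  have hweight : ∀ i, lam i ^ p * dist (x i) (x' i) ^ p = ‖lam i • (δ (x i) - δ (x' i))‖ ^ p :=
    fun i => by
      rw [norm_smul, Real.norm_eq_abs, abs_of_pos (hlam i), ← dist_eq_norm, hδ,
        Real.mul_rpow (hlam i).le dist_nonneg]
  simp_rw [hterm, hweight]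
  exact h n _ ys

theorem exists_linearMap_le_sublinear_eq {E : Type*} [AddCommGroup E] [Module ℝ E] (N : E → ℝ)
    (N_hom : ∀ c : ℝ, 0 < c → ∀ x, N (c • x) = c * N x) (N_add : ∀ x y, N (x + y) ≤ N x + N y)
    (x : E) : ∃ g : E →ₗ[ℝ] ℝ, g x = N x ∧ ∀ y, g y ≤ N y := by
  have hN0 : N 0 = 0 := by
    have := N_hom 2 two_pos 0
    rw [smul_zero] at this
    linarith
  have hker : ∀ c : ℝ, c • x = 0 → c • N x = 0 := fun c hc => by
    rcases smul_eq_zero.1 hc with rfl | rfl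
    · exact zero_smul _ _
    · rw [hN0, smul_zero]
  set f := LinearPMap.mkSpanSingleton' (σ := RingHom.id ℝ) x (N x) hker
  have hf : ∀ y : f.domain, f y ≤ N y := by
    rintro ⟨y, hy⟩
    obtain ⟨c, rfl⟩ := mem_span_singleton.1 hy
    rw [LinearPMap.mkSpanSingleton'_apply, RingHom.id_apply, smul_eq_mul]
    show c * N x ≤ N (c • x)
    rcases lt_or_ge 0 c with hc | hc
    · exact (N_hom c hc x).ge
    · have := N_add (c • x) ((1 - c) • x)
      rw [← add_smul, add_sub_cancel, one_smul, N_hom (1 - c) (by linarith) x] at this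
      linarith
  obtain ⟨g, hgf, hgN⟩ := exists_extension_of_le_sublinear f N N_hom N_add hf
  exact ⟨g, (hgf ⟨x, mem_span_singleton_self x⟩).trans
    (LinearPMap.mkSpanSingleton'_apply_self _ _ _ _), hgN⟩

section AtomicNorm

open scoped Pointwise

variable {E : Type*} [AddCommGroup E] [Module ℝ E] {ι : Type*} (v : ι → E) (w : ι → ℝ)

def atomicWeights (z : E) : Set ℝ :=
  {r | ∃ (n : ℕ) (a : Fin n → ℝ) (k : Fin n → ι),
    z = ∑ j, a j • v (k j) ∧ r = ∑ j, |a j| * w (k j)}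

-- `sInf ∅ = 0`: the atomic norm vanishes off the span of `v`.
def atomicNorm (z : E) : ℝ :=
  sInf (atomicWeights v w z)

variable {v w}

theorem atomicWeights_nonempty {z : E} (hz : z ∈ span ℝ (range v)) :
    (atomicWeights v w z).Nonempty := by
  obtain ⟨n, a, g, hsum⟩ := mem_span_set'.1 hz
  choose k hk using fun j => (g j).2
  exact ⟨_, n, a, k, by simp only [hk, hsum], rfl⟩

theorem smul_mem_atomicWeights {c r : ℝ} (hc : 0 ≤ c) {z : E} (hr : r ∈ atomicWeights v w z) :
    c * r ∈ atomicWeights v w (c • z) := by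
  obtain ⟨n, a, k, rfl, rfl⟩ := hr
  refine ⟨n, c • a, k, ?_, ?_⟩
  · simp [Finset.smul_sum, smul_smul]
  · simp [Finset.mul_sum, abs_mul, abs_of_nonneg hc, mul_assoc]

theorem add_mem_atomicWeights {r₁ r₂ : ℝ} {z₁ z₂ : E} (hr₁ : r₁ ∈ atomicWeights v w z₁)
    (hr₂ : r₂ ∈ atomicWeights v w z₂) : r₁ + r₂ ∈ atomicWeights v w (z₁ + z₂) := by
  obtain ⟨n₁, a₁, k₁, rfl, rfl⟩ := hr₁
  obtain ⟨n₂, a₂, k₂, rfl, rfl⟩ := hr₂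
  exact ⟨n₁ + n₂, Fin.append a₁ a₂, Fin.append k₁ k₂, by simp [Fin.sum_univ_add],
    by simp [Fin.sum_univ_add]⟩

theorem smul_atom_mem_atomicWeights (c : ℝ) (k : ι) :
    |c| * w k ∈ atomicWeights v w (c • v k) :=
  ⟨1, ![c], ![k], by simp, by simp⟩

theorem atomicNorm_smul {c : ℝ} (hc : 0 < c) (z : E) :
    atomicNorm v w (c • z) = c * atomicNorm v w z := by
  have hset : atomicWeights v w (c • z) = c • atomicWeights v w z := by
    ext r
    refine ⟨fun hr => ⟨c⁻¹ * r, ?_, by simp [hc.ne']⟩, ?_⟩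
    · simpa [smul_smul, hc.ne'] using smul_mem_atomicWeights (inv_nonneg.2 hc.le) hr
    · rintro ⟨r, hr, rfl⟩
      exact smul_mem_atomicWeights hc.le hr
  rw [atomicNorm, hset, Real.sInf_smul_of_nonneg hc.le, smul_eq_mul, atomicNorm]

theorem atomicNorm_le (hw : ∀ k, 0 ≤ w k) {z : E} {r : ℝ} (hr : r ∈ atomicWeights v w z) :
    atomicNorm v w z ≤ r := by
  refine csInf_le ⟨0, ?_⟩ hr
  rintro _ ⟨n, a, k, -, rfl⟩
  exact Finset.sum_nonneg fun j _ => mul_nonneg (abs_nonneg _) (hw _)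

theorem atomicNorm_add_le (hw : ∀ k, 0 ≤ w k) {z₁ z₂ : E} (hz₁ : z₁ ∈ span ℝ (range v))
    (hz₂ : z₂ ∈ span ℝ (range v)) :
    atomicNorm v w (z₁ + z₂) ≤ atomicNorm v w z₁ + atomicNorm v w z₂ := by
  refine le_of_forall_pos_lt_add fun ε hε => ?_
  obtain ⟨r₁, hr₁, hlt₁⟩ := Real.lt_sInf_add_pos (atomicWeights_nonempty hz₁) (half_pos hε)
  obtain ⟨r₂, hr₂, hlt₂⟩ := Real.lt_sInf_add_pos (atomicWeights_nonempty hz₂) (half_pos hε)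
  have := atomicNorm_le hw (add_mem_atomicWeights hr₁ hr₂)
  unfold atomicNorm at *
  linarith

end AtomicNorm

theorem atomicNorm_le_norm {F : Type*} [NormedAddCommGroup F] [NormedSpace ℝ F] {ι : Type*}
    {v : ι → F} {w : ι → ℝ} (hw : ∀ k, 0 ≤ w k)
    (hext : ∀ g : span ℝ (range v) →ₗ[ℝ] ℝ,
      (∀ k, |g ⟨v k, subset_span (mem_range_self k)⟩| ≤ w k) →
        ∃ φ : F →L[ℝ] ℝ, ‖φ‖ ≤ 1 ∧ ∀ z : span ℝ (range v), φ z = g z)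
    {m : F} (hm : m ∈ span ℝ (range v)) : atomicNorm v w m ≤ ‖m‖ := by
  set V := span ℝ (range v)
  obtain ⟨g, hgm, hgN⟩ := exists_linearMap_le_sublinear_eq (fun z : V => atomicNorm v w z)
    (fun c hc z => atomicNorm_smul hc (z : F))
    (fun z₁ z₂ => atomicNorm_add_le hw z₁.2 z₂.2) ⟨m, hm⟩
  have hatom : ∀ k, |g ⟨v k, subset_span (mem_range_self k)⟩| ≤ w k := by
    intro k
    have hle : ∀ c : ℝ, c * g ⟨v k, subset_span (mem_range_self k)⟩ ≤ |c| * w k := fun c => by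
      rw [← smul_eq_mul, ← map_smul]
      exact (hgN _).trans (atomicNorm_le hw (smul_atom_mem_atomicWeights c k))
    rw [abs_le]
    constructor
    · simpa [_root_.neg_le] using hle (-1)
    · simpa using hle 1
  obtain ⟨φ, hφ, hφg⟩ := hext g hatom
  calc atomicNorm v w m = φ m := by rw [← hgm]; exact (hφg ⟨m, hm⟩).symm
    _ ≤ ‖φ m‖ := le_abs_self _
    _ ≤ ‖m‖ := by simpa using φ.le_of_opNorm_le hφ m

namespace IsFreeSpace

variable {X : Type u} [MetricSpace X] {x0 : X} {F : Type v} [NormedAddCommGroup F]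
  [NormedSpace ℝ F] [CompleteSpace F] {δ : X → F}

theorem dense_span_range_sub (hfree : IsFreeSpace.{u, v, w} x0 δ) :
    Dense (span ℝ (range fun uw : X × X => δ uw.1 - δ uw.2) : Set F) :=
  hfree.2.2.1.mono <| span_le.2 <| range_subset_iff.2 fun x =>
    subset_span ⟨(x, x0), by simp [hfree.2.1]⟩

theorem exists_extension_of_abs_le_dist (hfree : IsFreeSpace.{u, v, w} x0 δ)
    (g : span ℝ (range fun uw : X × X => δ uw.1 - δ uw.2) →ₗ[ℝ] ℝ)
    (hg : ∀ uw : X × X, |g ⟨δ uw.1 - δ uw.2, subset_span (mem_range_self uw)⟩| ≤ dist uw.1 uw.2) :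
    ∃ φ : F →L[ℝ] ℝ, ‖φ‖ ≤ 1 ∧
      ∀ z : span ℝ (range fun uw : X × X => δ uw.1 - δ uw.2), φ z = g z := by
  let mol : X → X → span ℝ (range fun uw : X × X => δ uw.1 - δ uw.2) := fun a b =>
    ⟨δ a - δ b, subset_span ⟨(a, b), rfl⟩⟩
  have hmol : ∀ a b, mol a x0 - mol b x0 = mol a b := fun a b =>
    Subtype.ext (sub_sub_sub_cancel_right _ _ _)
  let f : X → ULift.{w} ℝ := fun x => ULift.up (g (mol x x0))
  have hf : LipschitzWith 1 f := LipschitzWith.of_dist_le_mul fun a b => by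
    rw [NNReal.coe_one, one_mul, ULift.dist_eq, Real.dist_eq, ← map_sub, hmol]
    exact hg (a, b)
  have hf0 : f x0 = 0 := by
    have : mol x0 x0 = 0 := Subtype.ext (sub_self _)
    simp only [f, this, map_zero]
    rfl
  obtain ⟨ĝ, ⟨hĝδ, hĝnorm⟩, -⟩ := hfree.2.2.2 (ULift.{w} ℝ) f ⟨1, hf⟩ hf0
  refine ⟨(LinearIsometryEquiv.ulift ℝ ℝ).toLinearIsometry.toContinuousLinearMap.comp ĝ, ?_, ?_⟩
  · rw [LinearIsometry.norm_toContinuousLinearMap_comp, hĝnorm]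
    exact_mod_cast csInf_le (OrderBot.bddBelow _) hf
  · have hφg : (↑((LinearIsometryEquiv.ulift ℝ ℝ).toLinearIsometry.toContinuousLinearMap.comp ĝ)
        : F →ₗ[ℝ] ℝ).comp (span ℝ _).subtype = g := by
      refine LinearMap.ext_on span_span_coe_preimage ?_
      rintro z ⟨uw, huw⟩
      obtain rfl : z = mol uw.1 uw.2 := Subtype.ext huw.symm
      change LinearIsometryEquiv.ulift ℝ ℝ (ĝ (δ uw.1 - δ uw.2)) = g (mol uw.1 uw.2)
      rw [map_sub, hĝδ, hĝδ, ← hmol, map_sub g]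
      rfl
    exact LinearMap.congr_fun hφg

theorem exists_molecular_repr (hfree : IsFreeSpace.{u, v, w} x0 δ) {m : F}
    (hm : m ∈ span ℝ (range fun uw : X × X => δ uw.1 - δ uw.2)) {ε : ℝ} (hε : 0 < ε) :
    ∃ (n : ℕ) (a : Fin n → ℝ) (uw : Fin n → X × X),
      m = ∑ j, a j • (δ (uw j).1 - δ (uw j).2) ∧
        ∑ j, |a j| * dist (uw j).1 (uw j).2 < ‖m‖ + ε := by
  obtain ⟨r, ⟨n, a, uw, hm, rfl⟩, hr⟩ := exists_lt_of_csInf_lt (atomicWeights_nonempty hm)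
    ((atomicNorm_le_norm (fun _ => dist_nonneg) hfree.exists_extension_of_abs_le_dist
      hm).trans_lt (lt_add_of_pos_right _ hε))
  exact ⟨n, a, uw, hm, hr⟩

variable {Y : Type*} [NormedAddCommGroup Y] [NormedSpace ℝ Y] {p q C : ℝ} {T : X → Y}
  {That : F →L[ℝ] Y}

theorem sum_abs_le_of_mem_span (hfree : IsFreeSpace.{u, v, w} x0 δ) (hpq : p.HolderConjugate q)
    (hThat : ∀ x, That (δ x) = T x) (hC : 0 ≤ C) (h : LipCohenCond p q T C) {n : ℕ}
    {x : Fin n → F} (hx : ∀ i, x i ∈ span ℝ (range fun uw : X × X => δ uw.1 - δ uw.2))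
    (ys : Fin n → Y →L[ℝ] ℝ) {ε : ℝ} (hε : 0 < ε) :
    ∑ i, |ys i (That (x i))| ≤ C * (∑ i, (‖x i‖ + ε) ^ p) ^ (1 / p) * weakLqNorm q ys := by
  choose k a uw hxi hlt using fun i => hfree.exists_molecular_repr (hx i) hε
  have hp := hpq.nonneg
  have hp' := hpq.one_div_nonneg
  calc ∑ i, |ys i (That (x i))|
      = ∑ i, |∑ j, a i j * (ys i (T (uw i j).1) - ys i (T (uw i j).2))| := by
        simp only [hxi, map_sum, map_smul, map_sub, hThat, smul_eq_mul]
    _ ≤ C * (∑ i, (∑ j, |a i j| * dist (uw i j).1 (uw i j).2) ^ p) ^ (1 / p) *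
          weakLqNorm q ys :=
        h.sum_abs_sum_le hC hpq a (fun i j => (uw i j).1) (fun i j => (uw i j).2) ys
    _ ≤ C * (∑ i, (‖x i‖ + ε) ^ p) ^ (1 / p) * weakLqNorm q ys := by
        gcongr
        · exact weakLqNorm_nonneg q ys
        · exact (hlt _).le

theorem cohenCond_of_lipCohenCond (hfree : IsFreeSpace.{u, v, w} x0 δ)
    (hpq : p.HolderConjugate q) (hThat : ∀ x, That (δ x) = T x) (hC : 0 ≤ C)
    (h : LipCohenCond p q T C) : CohenCond p q That C := by
  refine CohenCond.of_dense hpq.pos hfree.dense_span_range_sub fun n x hx ys => ?_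
  have hcont : Continuous fun ε : ℝ =>
      C * (∑ i, (‖x i‖ + ε) ^ p) ^ (1 / p) * dualBallSup q ys := by
    refine Continuous.mul (continuous_const.mul ?_) continuous_const
    exact (continuous_finsetSum _ fun i _ => ((continuous_const.add continuous_id).rpow_const
      fun _ => Or.inr hpq.nonneg)).rpow_const fun _ => Or.inr hpq.one_div_nonneg
  simpa using ge_of_tendsto ((hcont.tendsto 0).mono_left nhdsWithin_le_nhds)
    (eventually_nhdsWithin_of_forall (s := Ioi 0) fun ε hε =>
      hfree.sum_abs_le_of_mem_span hpq hThat hC h hx ys hε)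

end IsFreeSpace

theorem lipCohen_iff_linearization_cohen_general {X : Type u} [MetricSpace X] (x0 : X)
    {Y : Type v} [NormedAddCommGroup Y] [NormedSpace ℝ Y]
    {F : Type v} [NormedAddCommGroup F] [NormedSpace ℝ F] [CompleteSpace F]
    (p q : ℝ) (hp : 1 < p) (hpq : 1 / p + 1 / q = 1)
    (δ : X → F) (hfree : IsFreeSpace.{u, v, v} x0 δ)
    (T : X → Y)
    (That : F →L[ℝ] Y) (hThat : ∀ x, That (δ x) = T x) :
    ((∃ C > 0, LipCohenCond p q T C) ↔ (∃ C > 0, CohenCond p q That C)) ∧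
    sInf {C : ℝ | 0 < C ∧ LipCohenCond p q T C} =
      sInf {C : ℝ | 0 < C ∧ CohenCond p q That C} := by
  have hconj : p.HolderConjugate q :=
    Real.holderConjugate_iff.2 ⟨hp, by simpa only [one_div] using hpq⟩
  have hiff : ∀ C > 0, LipCohenCond p q T C ↔ CohenCond p q That C := fun C hC =>
    ⟨hfree.cohenCond_of_lipCohenCond hconj hThat hC.le, lipCohenCond_of_cohenCond hfree.1 hThat⟩
  exact ⟨exists_congr fun C => and_congr_right (hiff C),
    congrArg sInf (Set.ext fun C => and_congr_right (hiff C))⟩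

/-- `T` is Lipschitz-Cohen strongly `p`-summing iff its linearization
`T̂` is Cohen strongly `p`-summing, and `d_p^L(T) = d_p(T̂)`. -/
theorem lipCohen_iff_linearization_cohen {X : Type u} [MetricSpace X] (x0 : X)
    {Y : Type v} [NormedAddCommGroup Y] [NormedSpace ℝ Y] [CompleteSpace Y]
    {F : Type v} [NormedAddCommGroup F] [NormedSpace ℝ F] [CompleteSpace F]
    (p q : ℝ) (hp : 1 < p) (hpq : 1 / p + 1 / q = 1)
    (δ : X → F) (hfree : IsFreeSpace.{u, v, v} x0 δ)
    (T : X → Y) (K : ℝ≥0) (hT : LipschitzWith K T) (hT0 : T x0 = 0)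
    (That : F →L[ℝ] Y) (hThat : ∀ x, That (δ x) = T x) :
    ((∃ C > 0, LipCohenCond p q T C) ↔ (∃ C > 0, CohenCond p q That C)) ∧
    sInf {C : ℝ | 0 < C ∧ LipCohenCond p q T C} =
      sInf {C : ℝ | 0 < C ∧ CohenCond p q That C} :=
  lipCohen_iff_linearization_cohen_general x0 p q hp hpq δ hfree T That hThat

end
end
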